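/- Let X^σ = ℝ^{dn} × ℝ^{dn} × G^σ with norm ‖(p,q,α)‖²_{X^σ} = |p|² + |q|² + ‖ω^σα‖²_{L²}. Under assumptions V ∈ C²_b(ℝ^{dn}; ℝ) and ω^{3/2−σ}χ ∈ L² with σ ∈ [1/2,1], the nonlinearity 𝒩 : X^σ → X^σ defined by (𝒩(u))_{p_j} = −∇_{q_j}V(q) − ∇_{q_j}I_j(q,α), (𝒩(u))_{q_j} = ∇f_j(p_j), (𝒩(u))_α(k) = −i Σ_{j=1}^n (χ(k)/√ω(k)) e^{−2πik·q_j}, maps bounded sets of X^σ to bounded sets of X^σ. -/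

import Mathlib

open MeasureTheory

noncomputable section

/-- The phase space X = ℝ^{dn} × ℝ^{dn} × {fields}: momenta (p_1,…,p_n), positions
(flattened into ℝ^{n×d}) and the field α : ℝ^d → ℂ. -/
abbrev PhaseSpace (d n : ℕ) :=
  (Fin n → EuclideanSpace ℝ (Fin d)) × EuclideanSpace ℝ (Fin n × Fin d) ×
    (EuclideanSpace ℝ (Fin d) → ℂ)

/-- The dispersion relation ω(k) = √(|k|² + m²). -/
def omega (d : ℕ) (m : ℝ) (k : EuclideanSpace ℝ (Fin d)) : ℝ :=
  Real.sqrt (‖k‖ ^ 2 + m ^ 2)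

/-- The j-th position block q_j ∈ ℝ^d of q ∈ ℝ^{n×d}. -/
def qblock (d n : ℕ) (q : EuclideanSpace ℝ (Fin n × Fin d)) (j : Fin n) :
    EuclideanSpace ℝ (Fin d) :=
  WithLp.toLp 2 (fun i => q (j, i))

/-- The phase 2π k·x. -/
def phase (d : ℕ) (k x : EuclideanSpace ℝ (Fin d)) : ℝ :=
  2 * Real.pi * ∑ i, k i * x i

/-- The i-th component of
∇_{q_j} I_j(q,α) = ∫ 2πi k (χ(k)/√ω(k)) [α(k) e^{2πi k·q_j} − conj(α(k)) e^{−2πi k·q_j}] dk. -/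
def gradI (d : ℕ) (m : ℝ) (χ : EuclideanSpace ℝ (Fin d) → ℝ)
    (qj : EuclideanSpace ℝ (Fin d)) (α : EuclideanSpace ℝ (Fin d) → ℂ) (i : Fin d) : ℂ :=
  ∫ k : EuclideanSpace ℝ (Fin d),
    2 * (Real.pi : ℂ) * Complex.I * ((k i : ℝ) : ℂ) *
      ((χ k / Real.sqrt (omega d m k) : ℝ) : ℂ) *
      (α k * Complex.exp (((phase d k qj : ℝ) : ℂ) * Complex.I) -
        (starRingEnd ℂ) (α k) * Complex.exp (-(((phase d k qj : ℝ) : ℂ) * Complex.I)))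

/-- The nonlinearity 𝒩 of the particle-field equation:
(𝒩(u))_{p_j} = −∇_{q_j}V(q) − ∇_{q_j}I_j(q,α), (𝒩(u))_{q_j} = ∇f_j(p_j),
(𝒩(u))_α(k) = −i Σ_j (χ(k)/√ω(k)) e^{−2πik·q_j}. -/
def NL (d n : ℕ) (m : ℝ) (χ : EuclideanSpace ℝ (Fin d) → ℝ)
    (V : EuclideanSpace ℝ (Fin n × Fin d) → ℝ)
    (f : Fin n → EuclideanSpace ℝ (Fin d) → ℝ)
    (u : PhaseSpace d n) : PhaseSpace d n :=
  (fun j => (WithLp.toLp 2 (fun i => -(gradient V u.2.1 (j, i)) -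
      (gradI d m χ (qblock d n u.2.1 j) u.2.2 i).re) : EuclideanSpace ℝ (Fin d)),
    (WithLp.toLp 2 (fun ji : Fin n × Fin d => gradient (f ji.1) (u.1 ji.1) ji.2) : EuclideanSpace ℝ (Fin n × Fin d)),
    fun k => -Complex.I * ∑ j : Fin n, ((χ k / Real.sqrt (omega d m k) : ℝ) : ℂ) *
      Complex.exp (-(((phase d k (qblock d n u.2.1 j) : ℝ) : ℂ) * Complex.I)))

/-- The X^σ norm: ‖(p,q,α)‖² = Σ|p_j|² + Σ|q_j|² + ‖ω^σ α‖²_{L²}. -/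
def normX (d n : ℕ) (σ m : ℝ) (u : PhaseSpace d n) : ℝ :=
  Real.sqrt ((∑ j, ‖u.1 j‖ ^ 2) + ‖u.2.1‖ ^ 2 +
    ((eLpNorm (fun k => ((omega d m k ^ σ : ℝ) : ℂ) * u.2.2 k) 2 volume).toReal) ^ 2)

/-- The free field flow Φ^f_t(p,q,α) = (p, q, e^{−itω}α). -/
def freeFlow (d n : ℕ) (m : ℝ) (t : ℝ) (u : PhaseSpace d n) : PhaseSpace d n :=
  (u.1, u.2.1, fun k => Complex.exp (-(Complex.I * (t : ℂ) * ((omega d m k : ℝ) : ℂ))) * u.2.2 k)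

/-- The non-autonomous vector field v(t,u) = Φ^f_{−t} ∘ 𝒩 ∘ Φ^f_t(u). -/
def vfield (d n : ℕ) (m : ℝ) (χ : EuclideanSpace ℝ (Fin d) → ℝ)
    (V : EuclideanSpace ℝ (Fin n × Fin d) → ℝ)
    (f : Fin n → EuclideanSpace ℝ (Fin d) → ℝ)
    (t : ℝ) (u : PhaseSpace d n) : PhaseSpace d n :=
  freeFlow d n m (-t) (NL d n m χ V f (freeFlow d n m t u))

end

noncomputable section

/-! Every component of `𝒩(u)` is controlled by `‖u‖_{X^σ}` through a pointwise weight
inequality followed by Cauchy–Schwarz. Since `|k| ≤ ω` and `m ≤ ω`, the kernel of `∇I_j`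
satisfies `|kᵢ| |χ| / √ω ≤ m⁻¹ · ω^{3/2-σ}|χ| · ω^σ`, so `|∇I_j| ≤ (4π/m) ‖ω^{3/2-σ}χ‖₂ ‖ω^σ α‖₂`;
the source term of the field obeys `ω^σ |χ| / √ω ≤ m^{2σ-2} ω^{3/2-σ} |χ|` because `σ ≤ 1`.
The potential term is bounded since `∇V` is, and `|∇f_j(p)|` is at most `1` in the
semi-relativistic case and `|p|/M_j` in the non-relativistic one. -/

open Real

lemma EuclideanSpace.norm_sq_le_of_forall_abs_le {ι : Type*} [Fintype ι]
    (v : EuclideanSpace ℝ ι) {C : ℝ} (h : ∀ i, |v i| ≤ C) :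
    ‖v‖ ^ 2 ≤ Fintype.card ι * C ^ 2 := by
  rw [EuclideanSpace.real_norm_sq_eq]
  calc ∑ i, v i ^ 2 ≤ ∑ _i : ι, C ^ 2 :=
        Finset.sum_le_sum fun i _ => sq_le_sq' (abs_le.1 (h i)).1 (abs_le.1 (h i)).2
    _ = Fintype.card ι * C ^ 2 := by simp

lemma norm_gradient_comp_norm_sq {F : Type*} [NormedAddCommGroup F] [InnerProductSpace ℝ F]
    [CompleteSpace F] {φ : ℝ → ℝ} {φ' : ℝ} {p : F} (h : HasDerivAt φ φ' (‖p‖ ^ 2)) :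
    ‖gradient (fun x => φ (‖x‖ ^ 2)) p‖ = 2 * |φ'| * ‖p‖ := by
  have hfd : HasFDerivAt (fun x => φ (‖x‖ ^ 2)) (φ' • (2 • innerSL ℝ p)) p :=
    h.comp_hasFDerivAt p (hasStrictFDerivAt_norm_sq p).hasFDerivAt
  rw [← (InnerProductSpace.toDual ℝ F).norm_map, toDual_gradient, hfd.fderiv, norm_smul,
    RCLike.norm_nsmul ℝ, innerSL_apply_norm, Real.norm_eq_abs, nsmul_eq_mul, Nat.cast_ofNat]
  ring

lemma norm_gradient_sqrt_norm_sq_add_sq_le_one {F : Type*} [NormedAddCommGroup F]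
    [InnerProductSpace ℝ F] [CompleteSpace F] {M : ℝ} (hM : 0 < M) (p : F) :
    ‖gradient (fun x : F => √(‖x‖ ^ 2 + M ^ 2)) p‖ ≤ 1 := by
  have hpos : 0 < ‖p‖ ^ 2 + M ^ 2 := by positivity
  have hφ : HasDerivAt (fun t => √(t + M ^ 2)) (1 / (2 * √(‖p‖ ^ 2 + M ^ 2))) (‖p‖ ^ 2) :=
    (Real.hasDerivAt_sqrt hpos.ne').comp_add_const _ _
  rw [norm_gradient_comp_norm_sq hφ, abs_of_pos (by positivity)]
  have hp : ‖p‖ ≤ √(‖p‖ ^ 2 + M ^ 2) :=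
    Real.le_sqrt_of_sq_le (by nlinarith)
  rw [show 2 * (1 / (2 * √(‖p‖ ^ 2 + M ^ 2))) * ‖p‖ = ‖p‖ / √(‖p‖ ^ 2 + M ^ 2) by
    field_simp]
  exact div_le_one_of_le₀ hp (Real.sqrt_nonneg _)

lemma norm_gradient_norm_sq_div {F : Type*} [NormedAddCommGroup F]
    [InnerProductSpace ℝ F] [CompleteSpace F] {M : ℝ} (hM : 0 < M) (p : F) :
    ‖gradient (fun x : F => ‖x‖ ^ 2 / (2 * M)) p‖ = ‖p‖ / M := by
  have hφ : HasDerivAt (fun t => t / (2 * M)) (1 / (2 * M)) (‖p‖ ^ 2) :=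
    (hasDerivAt_id _).div_const _
  rw [norm_gradient_comp_norm_sq hφ, abs_of_pos (by positivity)]
  field_simp

lemma norm_gradient_kinetic_le {d n : ℕ} {M : Fin n → ℝ} (hM : ∀ j, 0 < M j)
    {f : Fin n → EuclideanSpace ℝ (Fin d) → ℝ}
    (hf : (∀ j p, f j p = √(‖p‖ ^ 2 + M j ^ 2)) ∨ (∀ j p, f j p = ‖p‖ ^ 2 / (2 * M j)))
    (j : Fin n) (p : EuclideanSpace ℝ (Fin d)) :
    ‖gradient (f j) p‖ ≤ max 1 (‖p‖ / M j) := by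
  rcases hf with hrel | hnonrel
  · rw [show f j = _ from funext (hrel j)]
    exact (norm_gradient_sqrt_norm_sq_add_sq_le_one (hM j) p).trans (le_max_left _ _)
  · rw [show f j = _ from funext (hnonrel j), norm_gradient_norm_sq_div (hM j)]
    exact le_max_right _ _

section Holder

variable {X : Type*} [MeasurableSpace X] {μ : Measure X} {E E' : Type*}
  [NormedAddCommGroup E] [NormedAddCommGroup E'] {F : X → E} {W : X → E'}

lemma integral_norm_mul_norm_le (hF : MemLp F 2 μ) (hW : MemLp W 2 μ) :
    ∫ x, ‖F x‖ * ‖W x‖ ∂μ ≤ (eLpNorm F 2 μ).toReal * (eLpNorm W 2 μ).toReal := by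
  have hF' : MemLp (‖F ·‖) (ENNReal.ofReal 2) μ := by simpa using hF.norm
  have hW' : MemLp (‖W ·‖) (ENNReal.ofReal 2) μ := by simpa using hW.norm
  have h := integral_mul_norm_le_Lp_mul_Lq Real.HolderConjugate.two_two hF' hW'
  simp only [norm_norm] at h
  rw [hF.eLpNorm_eq_integral_rpow_norm two_ne_zero ENNReal.ofNat_ne_top,
    hW.eLpNorm_eq_integral_rpow_norm two_ne_zero ENNReal.ofNat_ne_top,
    ENNReal.toReal_ofReal (by positivity), ENNReal.toReal_ofReal (by positivity)]
  simpa using h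

lemma norm_integral_le_of_norm_le_mul {G : Type*} [NormedAddCommGroup G] [NormedSpace ℝ G]
    {g : X → G} (hF : MemLp F 2 μ) (hW : MemLp W 2 μ) {c : ℝ} (hc : 0 ≤ c)
    (h : ∀ x, ‖g x‖ ≤ c * (‖F x‖ * ‖W x‖)) :
    ‖∫ x, g x ∂μ‖ ≤ c * ((eLpNorm F 2 μ).toReal * (eLpNorm W 2 μ).toReal) := by
  have hbound : 0 ≤ c * ((eLpNorm F 2 μ).toReal * (eLpNorm W 2 μ).toReal) := by positivity
  by_cases hg : Integrable g μ
  · calc ‖∫ x, g x ∂μ‖ ≤ ∫ x, ‖g x‖ ∂μ := norm_integral_le_integral_norm g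
      _ ≤ ∫ x, c * (‖F x‖ * ‖W x‖) ∂μ :=
        integral_mono hg.norm ((hF.norm.integrable_mul hW.norm).const_mul c) h
      _ ≤ c * ((eLpNorm F 2 μ).toReal * (eLpNorm W 2 μ).toReal) := by
        rw [integral_const_mul]
        exact mul_le_mul_of_nonneg_left (integral_norm_mul_norm_le hF hW) hc
  · rwa [integral_undef hg, norm_zero]

end Holder

section Omega

variable {d : ℕ} {m : ℝ}

lemma omega_pos (hm : 0 < m) (k : EuclideanSpace ℝ (Fin d)) : 0 < omega d m k :=
  Real.sqrt_pos.2 (by positivity)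

lemma le_omega (k : EuclideanSpace ℝ (Fin d)) : m ≤ omega d m k :=
  Real.le_sqrt_of_sq_le (by nlinarith [sq_nonneg ‖k‖])

lemma norm_le_omega (k : EuclideanSpace ℝ (Fin d)) : ‖k‖ ≤ omega d m k :=
  Real.le_sqrt_of_sq_le (by nlinarith [sq_nonneg m])

lemma abs_apply_div_sqrt_omega_le (hm : 0 < m) (σ : ℝ) (k : EuclideanSpace ℝ (Fin d))
    (i : Fin d) :
    |k i| / √(omega d m k) ≤ omega d m k ^ ((3 : ℝ) / 2 - σ) * omega d m k ^ σ / m := by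
  have hω := omega_pos hm k
  have hki : |k i| ≤ omega d m k :=
    (PiLp.norm_apply_le k i).trans (norm_le_omega k)
  rw [div_le_div_iff₀ (Real.sqrt_pos.2 hω) hm, ← Real.rpow_add hω, Real.sqrt_eq_rpow,
    ← Real.rpow_add hω, show (3 : ℝ) / 2 - σ + σ + 1 / 2 = (2 : ℕ) by norm_num,
    Real.rpow_natCast, sq]
  exact mul_le_mul hki (le_omega k) hm.le hω.le

lemma rpow_div_sqrt_omega_le (hm : 0 < m) {σ : ℝ} (hσ : σ ≤ 1) (k : EuclideanSpace ℝ (Fin d)) :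
    omega d m k ^ σ / √(omega d m k) ≤ m ^ (2 * σ - 2) * omega d m k ^ ((3 : ℝ) / 2 - σ) := by
  have hω := omega_pos hm k
  rw [Real.sqrt_eq_rpow, ← Real.rpow_sub hω,
    show σ - 1 / 2 = (2 * σ - 2) + ((3 : ℝ) / 2 - σ) by ring, Real.rpow_add hω]
  exact mul_le_mul_of_nonneg_right
    (Real.rpow_le_rpow_of_nonpos hm (le_omega k) (by linarith)) (by positivity)

end Omega

lemma norm_mul_exp_sub_conj_mul_exp_le (a : ℂ) (θ : ℝ) :
    ‖a * Complex.exp (θ * Complex.I) - starRingEnd ℂ a * Complex.exp (-(θ * Complex.I))‖ ≤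
      2 * ‖a‖ := by
  refine (norm_sub_le _ _).trans_eq ?_
  simp only [norm_mul, RCLike.norm_conj, Complex.norm_exp, Complex.neg_re, Complex.re_ofReal_mul,
    Complex.I_re, mul_zero, neg_zero, Real.exp_zero]
  ring

section Bounds

variable {d : ℕ} {m σ : ℝ} {χ : EuclideanSpace ℝ (Fin d) → ℝ}

lemma norm_gradI_le (hm : 0 < m)
    (hχ : MemLp (fun k => omega d m k ^ ((3 : ℝ) / 2 - σ) * χ k) 2 volume)
    {α : EuclideanSpace ℝ (Fin d) → ℂ}
    (hα : MemLp (fun k => ((omega d m k ^ σ : ℝ) : ℂ) * α k) 2 volume)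
    (qj : EuclideanSpace ℝ (Fin d)) (i : Fin d) :
    ‖gradI d m χ qj α i‖ ≤ 4 * π / m *
      ((eLpNorm (fun k => omega d m k ^ ((3 : ℝ) / 2 - σ) * χ k) 2 volume).toReal *
        (eLpNorm (fun k => ((omega d m k ^ σ : ℝ) : ℂ) * α k) 2 volume).toReal) := by
  refine norm_integral_le_of_norm_le_mul hχ hα (by positivity) fun k => ?_
  have hω := omega_pos hm k
  calc _ = 2 * π * (|k i| / √(omega d m k)) * |χ k| *
        ‖α k * Complex.exp (phase d k qj * Complex.I) -
          starRingEnd ℂ (α k) * Complex.exp (-(phase d k qj * Complex.I))‖ := by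
        simp only [norm_mul, norm_div, Complex.norm_real, Complex.norm_I, Complex.norm_ofNat,
          Real.norm_eq_abs, abs_of_pos Real.pi_pos, abs_of_nonneg (Real.sqrt_nonneg _)]
        ring
    _ ≤ 2 * π * (omega d m k ^ ((3 : ℝ) / 2 - σ) * omega d m k ^ σ / m) * |χ k| *
        (2 * ‖α k‖) := by
        gcongr 2 * π * ?_ * _ * ?_
        · exact abs_apply_div_sqrt_omega_le hm σ k i
        · exact norm_mul_exp_sub_conj_mul_exp_le _ _
    _ = _ := by
        simp only [norm_mul, Complex.norm_real, Real.norm_eq_abs,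
          abs_of_nonneg (Real.rpow_nonneg hω.le _)]
        ring

lemma toReal_eLpNorm_NL_field_le (hm : 0 < m) (hσ : σ ≤ 1)
    (hχ : MemLp (fun k => omega d m k ^ ((3 : ℝ) / 2 - σ) * χ k) 2 volume) {n : ℕ}
    (V : EuclideanSpace ℝ (Fin n × Fin d) → ℝ) (f : Fin n → EuclideanSpace ℝ (Fin d) → ℝ)
    (u : PhaseSpace d n) :
    (eLpNorm (fun k => ((omega d m k ^ σ : ℝ) : ℂ) * (NL d n m χ V f u).2.2 k) 2 volume).toReal ≤
      n * m ^ (2 * σ - 2) *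
        (eLpNorm (fun k => omega d m k ^ ((3 : ℝ) / 2 - σ) * χ k) 2 volume).toReal := by
  set F := fun k => omega d m k ^ ((3 : ℝ) / 2 - σ) * χ k
  set c : ℝ := n * m ^ (2 * σ - 2)
  have hc : 0 ≤ c := by positivity
  have hpt : ∀ k, ‖((omega d m k ^ σ : ℝ) : ℂ) * (NL d n m χ V f u).2.2 k‖ ≤ ‖(c • F) k‖ := by
    intro k
    have hω := omega_pos hm k
    have hterm : ∀ j, ‖((χ k / √(omega d m k) : ℝ) : ℂ) *
        Complex.exp (-(phase d k (qblock d n u.2.1 j) * Complex.I))‖ = |χ k| / √(omega d m k) := by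
      intro j
      simp [Complex.norm_exp, abs_of_nonneg (Real.sqrt_nonneg _)]
    calc _ = omega d m k ^ σ * ‖∑ j : Fin n, ((χ k / √(omega d m k) : ℝ) : ℂ) *
          Complex.exp (-(phase d k (qblock d n u.2.1 j) * Complex.I))‖ := by
          simp [NL, abs_of_pos (Real.rpow_pos_of_pos hω σ)]
      _ ≤ omega d m k ^ σ * ∑ _j : Fin n, |χ k| / √(omega d m k) := by
          gcongr
          exact (norm_sum_le _ _).trans_eq (Finset.sum_congr rfl fun j _ => hterm j)
      _ = n * |χ k| * (omega d m k ^ σ / √(omega d m k)) := by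
          rw [Finset.sum_const, Finset.card_univ, Fintype.card_fin, nsmul_eq_mul]
          ring
      _ ≤ n * |χ k| * (m ^ (2 * σ - 2) * omega d m k ^ ((3 : ℝ) / 2 - σ)) := by
          gcongr
          exact rpow_div_sqrt_omega_le hm hσ k
      _ = ‖(c • F) k‖ := by
          simp only [F, c, Pi.smul_apply, smul_eq_mul, norm_mul, Real.norm_eq_abs, Nat.abs_cast,
            abs_of_pos (Real.rpow_pos_of_pos hω _), abs_of_pos (Real.rpow_pos_of_pos hm _)]
          ring
  calc _ ≤ (eLpNorm (c • F) 2 volume).toReal :=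
        ENNReal.toReal_mono (hχ.const_smul c).eLpNorm_ne_top (eLpNorm_mono hpt)
    _ = c * (eLpNorm F 2 volume).toReal := by
        rw [eLpNorm_const_smul, ENNReal.toReal_mul, toReal_enorm, Real.norm_of_nonneg hc]

end Bounds

lemma norm_sq_eq_sum_norm_qblock_sq {d n : ℕ} (q : EuclideanSpace ℝ (Fin n × Fin d)) :
    ‖q‖ ^ 2 = ∑ j, ‖qblock d n q j‖ ^ 2 := by
  simp only [EuclideanSpace.real_norm_sq_eq, Fintype.sum_prod_type, qblock]

lemma qblock_NL_snd {d n : ℕ} (m : ℝ) (χ : EuclideanSpace ℝ (Fin d) → ℝ)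
    (V : EuclideanSpace ℝ (Fin n × Fin d) → ℝ) (f : Fin n → EuclideanSpace ℝ (Fin d) → ℝ)
    (u : PhaseSpace d n) (j : Fin n) :
    qblock d n (NL d n m χ V f u).2.1 j = gradient (f j) (u.1 j) :=
  rfl

section NormX

variable {d n : ℕ} {σ m : ℝ}

lemma norm_momentum_le_normX (u : PhaseSpace d n) (j : Fin n) : ‖u.1 j‖ ≤ normX d n σ m u := by
  refine (le_abs_self _).trans (Real.abs_le_sqrt ?_)
  have := Finset.single_le_sum (fun j _ => sq_nonneg ‖u.1 j‖) (Finset.mem_univ j)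
  nlinarith [sq_nonneg ‖u.2.1‖,
    sq_nonneg (eLpNorm (fun k => ((omega d m k ^ σ : ℝ) : ℂ) * u.2.2 k) 2 volume).toReal]

lemma toReal_eLpNorm_field_le_normX (u : PhaseSpace d n) :
    (eLpNorm (fun k => ((omega d m k ^ σ : ℝ) : ℂ) * u.2.2 k) 2 volume).toReal ≤
      normX d n σ m u := by
  refine (le_abs_self _).trans (Real.abs_le_sqrt ?_)
  have : 0 ≤ ∑ j, ‖u.1 j‖ ^ 2 := by positivity
  nlinarith [sq_nonneg ‖u.2.1‖]

lemma normX_le_sqrt {u : PhaseSpace d n} {A B C : ℝ} (hp : ∀ j, ‖u.1 j‖ ^ 2 ≤ A)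
    (hq : ‖u.2.1‖ ^ 2 ≤ B)
    (hα : (eLpNorm (fun k => ((omega d m k ^ σ : ℝ) : ℂ) * u.2.2 k) 2 volume).toReal ≤ C) :
    normX d n σ m u ≤ √(n * A + B + C ^ 2) := by
  refine Real.sqrt_le_sqrt (add_le_add (add_le_add ?_ hq) (pow_le_pow_left₀ (by positivity) hα 2))
  simpa using Finset.sum_le_sum fun j (_ : j ∈ Finset.univ) => hp j

end NormX

theorem NL_bounded_on_bounded_general (d n : ℕ) (m σ : ℝ) (hm : 0 < m)
    (hσ : σ ∈ Set.Icc (1 / 2 : ℝ) 1)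
    (χ : EuclideanSpace ℝ (Fin d) → ℝ)
    (hχ : MemLp (fun k => omega d m k ^ ((3 : ℝ) / 2 - σ) * χ k) 2 volume)
    (V : EuclideanSpace ℝ (Fin n × Fin d) → ℝ)
    (hV1 : ∃ C, ∀ q, ‖gradient V q‖ ≤ C)
    (M : Fin n → ℝ) (hM : ∀ j, 0 < M j)
    (f : Fin n → EuclideanSpace ℝ (Fin d) → ℝ)
    (hf : (∀ j p, f j p = Real.sqrt (‖p‖ ^ 2 + M j ^ 2)) ∨
          (∀ j p, f j p = ‖p‖ ^ 2 / (2 * M j))) :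
    ∀ R : ℝ, ∃ C : ℝ, ∀ u : PhaseSpace d n,
      MemLp (fun k => ((omega d m k ^ σ : ℝ) : ℂ) * u.2.2 k) 2 volume →
      normX d n σ m u ≤ R → normX d n σ m (NL d n m χ V f u) ≤ C := by
  obtain ⟨CV, hCV⟩ := hV1
  intro R
  set Cχ := (eLpNorm (fun k => omega d m k ^ ((3 : ℝ) / 2 - σ) * χ k) 2 volume).toReal
  refine ⟨√(n * (Fintype.card (Fin d) * (CV + 4 * π / m * (Cχ * R)) ^ 2) +
    ∑ j, max 1 (R / M j) ^ 2 + (n * m ^ (2 * σ - 2) * Cχ) ^ 2), fun u hα hR => ?_⟩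
  refine normX_le_sqrt (fun j => ?_) ?_ (toReal_eLpNorm_NL_field_le hm hσ.2 hχ V f u)
  · refine EuclideanSpace.norm_sq_le_of_forall_abs_le _ fun i => ?_
    have hI : ‖gradI d m χ (qblock d n u.2.1 j) u.2.2 i‖ ≤ 4 * π / m * (Cχ * R) :=
      (norm_gradI_le hm hχ hα _ i).trans
        (by gcongr; exact (toReal_eLpNorm_field_le_normX u).trans hR)
    calc |-gradient V u.2.1 (j, i) - (gradI d m χ (qblock d n u.2.1 j) u.2.2 i).re|
        ≤ |gradient V u.2.1 (j, i)| + |(gradI d m χ (qblock d n u.2.1 j) u.2.2 i).re| := by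
          simpa using abs_sub (-gradient V u.2.1 (j, i)) _
      _ ≤ CV + 4 * π / m * (Cχ * R) :=
          add_le_add ((PiLp.norm_apply_le _ _).trans (hCV _))
            ((Complex.abs_re_le_norm _).trans hI)
  · simp only [norm_sq_eq_sum_norm_qblock_sq, qblock_NL_snd]
    refine Finset.sum_le_sum fun j _ => pow_le_pow_left₀ (norm_nonneg _) ?_ 2
    exact (norm_gradient_kinetic_le hM hf j _).trans <| max_le_max le_rfl <|
      div_le_div_of_nonneg_right ((norm_momentum_le_normX u j).trans hR) (hM j).le

/-- Under V ∈ C²_b(ℝ^{dn}; ℝ) and ω^{3/2−σ}χ ∈ L² with σ ∈ [1/2,1], the nonlinearity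
𝒩 : X^σ → X^σ maps bounded sets of X^σ to bounded sets of X^σ. -/
theorem NL_bounded_on_bounded (d n : ℕ) (m σ : ℝ) (hm : 0 < m)
    (hσ : σ ∈ Set.Icc (1 / 2 : ℝ) 1)
    (χ : EuclideanSpace ℝ (Fin d) → ℝ)
    (hχ : MemLp (fun k => omega d m k ^ ((3 : ℝ) / 2 - σ) * χ k) 2 volume)
    (V : EuclideanSpace ℝ (Fin n × Fin d) → ℝ)
    (hV : ContDiff ℝ 2 V)
    (hV1 : ∃ C, ∀ q, ‖gradient V q‖ ≤ C)
    (hV2 : ∃ C, ∀ q, ‖fderiv ℝ (fderiv ℝ V) q‖ ≤ C)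
    (M : Fin n → ℝ) (hM : ∀ j, 0 < M j)
    (f : Fin n → EuclideanSpace ℝ (Fin d) → ℝ)
    (hf : (∀ j p, f j p = Real.sqrt (‖p‖ ^ 2 + M j ^ 2)) ∨
          (∀ j p, f j p = ‖p‖ ^ 2 / (2 * M j))) :
    ∀ R : ℝ, ∃ C : ℝ, ∀ u : PhaseSpace d n,
      MemLp (fun k => ((omega d m k ^ σ : ℝ) : ℂ) * u.2.2 k) 2 volume →
      normX d n σ m u ≤ R → normX d n σ m (NL d n m χ V f u) ≤ C :=
  NL_bounded_on_bounded_general d n m σ hm hσ χ hχ V hV1 M hM f hf
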